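/- arXiv:1101.0622 — 4 statements merged into one kernel-verified Lean document; each statement's English description precedes it below -/
import Mathlib

section
/- Let R = ℚ[x₀, x₁, x₂, x₃, x₄] and let D be the derivation with D(xᵢ) = i·xᵢ₋₁. Then the polynomial −6·x₂³ − 6·x₀·x₃² − 6·x₁²·x₄ + 6·x₀·x₂·x₄ + 12·x₁·x₂·x₃ lies in the kernel of D. -/
open MvPolynomial

/-- The Weitzenböck derivation of the binary quartic kills
`−6x₂³ − 6x₀x₃² − 6x₁²x₄ + 6x₀x₂x₄ + 12x₁x₂x₃`. -/
theorem stmt_1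
    (D : Derivation ℚ (MvPolynomial (Fin 5) ℚ) (MvPolynomial (Fin 5) ℚ))
    (hD0 : D (X 0) = 0)
    (hD : ∀ i : Fin 5, i ≠ 0 → D (X i) = (i : ℕ) • X (i - 1)) :
    D (-6 * X 2 ^ 3 - 6 * X 0 * X 3 ^ 2 - 6 * X 1 ^ 2 * X 4
        + 6 * X 0 * X 2 * X 4 + 12 * X 1 * X 2 * X 3) = 0 := by
  have h1 := hD 1 (by decide)
  have h2 := hD 2 (by decide)
  have h3 := hD 3 (by decide)
  have h4 := hD 4 (by decide)
  norm_num [show ((1:Fin 5):ℕ)=1 from rfl, show ((2:Fin 5):ℕ)=2 from rfl,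
    show ((3:Fin 5):ℕ)=3 from rfl, show ((4:Fin 5):ℕ)=4 from rfl] at h1 h2 h3 h4
  have h6 : D 6 = 0 := by
    rw [show (6 : MvPolynomial (Fin 5) ℚ) = ((6 : ℕ) : MvPolynomial (Fin 5) ℚ) by norm_num]
    exact D.map_natCast 6
  have h12 : D 12 = 0 := by
    rw [show (12 : MvPolynomial (Fin 5) ℚ) = ((12 : ℕ) : MvPolynomial (Fin 5) ℚ) by norm_num]
    exact D.map_natCast 12
  simp only [map_add, map_sub, map_mul, map_neg, Derivation.leibniz,
    Derivation.leibniz_pow, hD0, h1, h2, h3, h4, h6, h12,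
    smul_eq_mul, nsmul_eq_mul]
  push_cast
  ring
end

section
/- Let R = ℚ[x₀, x₁, x₂, x₃, x₄] and let D be the derivation with D(xᵢ) = i·xᵢ₋₁. The two kernel elements I₂ = 6x₂² + 2x₀x₄ − 8x₁x₃ and I₃ = −6x₂³ − 6x₀x₃² − 6x₁²x₄ + 6x₀x₂x₄ + 12x₁x₂x₃ are algebraically independent over ℚ. -/
open MvPolynomial

/-- The two basic kernel elements of the Weitzenböck derivation of the binary quartic
are algebraically independent over ℚ. -/
theorem stmt_2
    (D : Derivation ℚ (MvPolynomial (Fin 5) ℚ) (MvPolynomial (Fin 5) ℚ))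
    (hD0 : D (X 0) = 0)
    (hD : ∀ i : Fin 5, i ≠ 0 → D (X i) = (i : ℕ) • X (i - 1)) :
    AlgebraicIndependent ℚ
      ![(6 * X 2 ^ 2 + 2 * X 0 * X 4 - 8 * X 1 * X 3 : MvPolynomial (Fin 5) ℚ),
        (-6 * X 2 ^ 3 - 6 * X 0 * X 3 ^ 2 - 6 * X 1 ^ 2 * X 4
          + 6 * X 0 * X 2 * X 4 + 12 * X 1 * X 2 * X 3 : MvPolynomial (Fin 5) ℚ)] := by
  -- Specialize x₀ ↦ 1, x₁ ↦ 0, x₂ ↦ 0, x₃ ↦ X 0, x₄ ↦ X 1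
  set φ : MvPolynomial (Fin 5) ℚ →ₐ[ℚ] MvPolynomial (Fin 2) ℚ :=
    aeval ![1, 0, 0, X 0, X 1] with hφ
  apply AlgebraicIndependent.of_comp φ
  have hx : AlgebraicIndependent ℚ ![(X 1 : MvPolynomial (Fin 2) ℚ), X 0] := by
    have h := (MvPolynomial.algebraicIndependent_X (Fin 2) ℚ).comp ![1, 0]
      (by decide : Function.Injective (![1, 0] : Fin 2 → Fin 2))
    convert h using 1
    funext i
    fin_cases i <;> simp
  have key := hx.polynomial_aeval_of_transcendental
    (f := ![Polynomial.C (2 : ℚ) * Polynomial.X, Polynomial.C (-6 : ℚ) * Polynomial.X ^ 2])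
    (fun i => by
      fin_cases i <;>
      · apply Polynomial.transcendental
        · simp
        · simp [Polynomial.leadingCoeff, mem_nonZeroDivisors_iff_ne_zero])
  have heq : (⇑φ ∘
      ![(6 * X 2 ^ 2 + 2 * X 0 * X 4 - 8 * X 1 * X 3 : MvPolynomial (Fin 5) ℚ),
        (-6 * X 2 ^ 3 - 6 * X 0 * X 3 ^ 2 - 6 * X 1 ^ 2 * X 4
          + 6 * X 0 * X 2 * X 4 + 12 * X 1 * X 2 * X 3 : MvPolynomial (Fin 5) ℚ)]) =
      fun i => Polynomial.aeval ((![(X 1 : MvPolynomial (Fin 2) ℚ), X 0]) i)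
        ((![Polynomial.C (2 : ℚ) * Polynomial.X, Polynomial.C (-6 : ℚ) * Polynomial.X ^ 2]) i) := by
    funext i
    fin_cases i <;>
    · show φ _ = _
      simp [hφ, map_ofNat]
  rw [heq]
  exact key
end

section
/- Let R = ℚ[x₀,…,x₃, y₀,…,y₄] and let D be the derivation with D(xᵢ)=i·xᵢ₋₁ for i=1,2,3, D(yⱼ)=j·yⱼ₋₁ for j=1,…,4, and D(x₀)=D(y₀)=0. Then the polynomial 6x₁²x₃²y₀ + 18x₁²x₂²y₂ − 12x₁³x₃y₂ − 12x₁³x₂y₃ + 6x₀²x₂²y₄ + 6x₂⁴y₀ + 6x₁⁴y₄ + 12x₁²x₂x₃y₁ − 12x₀x₁x₃²y₁ + 12x₀x₂²x₃y₁ + 12x₀x₁²x₃y₃ − 12x₀x₁²x₂y₄ − 12x₀²x₂x₃y₃ − 12x₁x₂²x₃y₀ + 12x₀x₁x₂²y₃ − 12x₀x₂³y₂ + 6x₀²x₃²y₂ − 12x₁x₂³y₁ lies in the kernel of D. -/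
open MvPolynomial

/-- In ℚ[x₀,…,x₃,y₀,…,y₄] (xᵢ = X i for i = 0,…,3, yⱼ = X (4+j) for j = 0,…,4), the
Weitzenböck derivation 𝒟₍₃,₄₎ kills the joint invariant of multidegree (4,1) of a binary
cubic and a binary quartic. -/
theorem stmt_10
    (D : Derivation ℚ (MvPolynomial (Fin 9) ℚ) (MvPolynomial (Fin 9) ℚ))
    (hx0 : D (X 0) = 0) (hx1 : D (X 1) = X 0)
    (hx2 : D (X 2) = 2 • X 1) (hx3 : D (X 3) = 3 • X 2)
    (hy0 : D (X 4) = 0) (hy1 : D (X 5) = X 4)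
    (hy2 : D (X 6) = 2 • X 5) (hy3 : D (X 7) = 3 • X 6) (hy4 : D (X 8) = 4 • X 7) :
    D (6 * X 1 ^ 2 * X 3 ^ 2 * X 4 + 18 * X 1 ^ 2 * X 2 ^ 2 * X 6
        - 12 * X 1 ^ 3 * X 3 * X 6 - 12 * X 1 ^ 3 * X 2 * X 7
        + 6 * X 0 ^ 2 * X 2 ^ 2 * X 8 + 6 * X 2 ^ 4 * X 4 + 6 * X 1 ^ 4 * X 8
        + 12 * X 1 ^ 2 * X 2 * X 3 * X 5 - 12 * X 0 * X 1 * X 3 ^ 2 * X 5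
        + 12 * X 0 * X 2 ^ 2 * X 3 * X 5 + 12 * X 0 * X 1 ^ 2 * X 3 * X 7
        - 12 * X 0 * X 1 ^ 2 * X 2 * X 8 - 12 * X 0 ^ 2 * X 2 * X 3 * X 7
        - 12 * X 1 * X 2 ^ 2 * X 3 * X 4 + 12 * X 0 * X 1 * X 2 ^ 2 * X 7
        - 12 * X 0 * X 2 ^ 3 * X 6 + 6 * X 0 ^ 2 * X 3 ^ 2 * X 6
        - 12 * X 1 * X 2 ^ 3 * X 5) = 0 := by
  have h6 : D 6 = 0 := by
    rw [show (6 : MvPolynomial (Fin 9) ℚ) = algebraMap ℚ _ 6 from (map_ofNat (algebraMap ℚ (MvPolynomial (Fin 9) ℚ)) 6).symm]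
    exact D.map_algebraMap 6
  have h12 : D 12 = 0 := by
    rw [show (12 : MvPolynomial (Fin 9) ℚ) = algebraMap ℚ _ 12 from (map_ofNat (algebraMap ℚ (MvPolynomial (Fin 9) ℚ)) 12).symm]
    exact D.map_algebraMap 12
  have h18 : D 18 = 0 := by
    rw [show (18 : MvPolynomial (Fin 9) ℚ) = algebraMap ℚ _ 18 from (map_ofNat (algebraMap ℚ (MvPolynomial (Fin 9) ℚ)) 18).symm]
    exact D.map_algebraMap 18
  simp only [Derivation.leibniz, Derivation.leibniz_pow, map_add, map_sub,
    hx0, hx1, hx2, hx3, hy0, hy1, hy2, hy3, hy4, h6, h12, h18, smul_eq_mul]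
  ring
end

section
/- Let R = ℚ[x₀, x₁, y₀, y₁] with the derivation D(x₁)=x₀, D(y₁)=y₀, D(x₀)=D(y₀)=0. Then the resultant x₀y₁ − x₁y₀ of the two linear forms lies in the kernel of D, and moreover x₀, y₀, and x₀y₁ − x₁y₀ are algebraically independent over ℚ. -/
open MvPolynomial

/-- For the Weitzenböck derivation 𝒟₍₁,₁₎ on ℚ[x₀,x₁,y₀,y₁] (x₀=X 0, x₁=X 1, y₀=X 2,
y₁=X 3), the resultant x₀y₁ − x₁y₀ lies in the kernel, and x₀, y₀, x₀y₁ − x₁y₀ are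
algebraically independent over ℚ. -/
theorem stmt_17
    (D : Derivation ℚ (MvPolynomial (Fin 4) ℚ) (MvPolynomial (Fin 4) ℚ))
    (hx0 : D (X 0) = 0) (hx1 : D (X 1) = X 0)
    (hy0 : D (X 2) = 0) (hy1 : D (X 3) = X 2) :
    D (X 0 * X 3 - X 1 * X 2) = 0 ∧
    AlgebraicIndependent ℚ
      ![(X 0 : MvPolynomial (Fin 4) ℚ), X 2, X 0 * X 3 - X 1 * X 2] := by
  constructor
  · rw [map_sub, Derivation.leibniz, Derivation.leibniz, hx0, hx1, hy0, hy1]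
    simp only [smul_eq_mul, smul_zero, mul_zero]
    ring
  · rw [algebraicIndependent_iff]
    intro p hp
    have key : (X 0 : MvPolynomial (Fin 3) ℚ) * p = 0 := by
      apply MvPolynomial.funext
      intro x
      rcases eq_or_ne (x 0) 0 with h0 | h0
      · simp [h0]
      · have hw : eval x p = 0 := by
          have h2 : (aeval ![x 0, 0, x 1, x 2 / x 0] : MvPolynomial (Fin 4) ℚ →ₐ[ℚ] ℚ)
              ((aeval ![X 0, X 2, X 0 * X 3 - X 1 * X 2]) p) = 0 := by
            rw [hp, map_zero]
          rw [comp_aeval_apply] at h2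
          have h3 : (fun i => (aeval ![x 0, 0, x 1, x 2 / x 0] : MvPolynomial (Fin 4) ℚ →ₐ[ℚ] ℚ)
              (![(X 0 : MvPolynomial (Fin 4) ℚ), X 2, X 0 * X 3 - X 1 * X 2] i)) = x := by
            funext i
            fin_cases i <;> simp <;> field_simp
          rw [h3] at h2
          simpa [aeval_def, Algebra.algebraMap_self] using h2
        simp [hw]
    have hX : (X 0 : MvPolynomial (Fin 3) ℚ) ≠ 0 := MvPolynomial.X_ne_zero 0
    exact (mul_eq_zero.mp key).resolve_left hX
end
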